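/- Let P be a simple histogram and let s and t be vertices with t ∉ I(s). If ℓ(s)_y > r(s)_y, then there is a shortest path in the visibility graph G(P) from s to t that passes through ℓ(s); if ℓ(s)_y < r(s)_y, then there is a shortest path from s to t that passes through r(s). -/

import Mathlib

open Classical Set

noncomputable section

/-- A *double histogram*: an `x`-monotone orthogonal polygon in general position whose
base line lies on the `x`-axis.  It is described by its bottom columns (over the
breakpoints `xs` with depths `d < 0`) and its top columns (over the breakpoints `ys`
with heights `h > 0`).  A *simple histogram* is the special case `n = 1`, where the
upper boundary is the single (base) edge at height `h 0`. -/
structure DoubleHistogram where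
  m : ℕ
  n : ℕ
  hm : 0 < m
  hn : 0 < n
  xs : Fin (m + 1) → ℝ
  ys : Fin (n + 1) → ℝ
  d : Fin m → ℝ
  h : Fin n → ℝ
  xs_mono : StrictMono xs
  ys_mono : StrictMono ys
  left_eq : ys 0 = xs 0
  right_eq : ys (Fin.last n) = xs (Fin.last m)
  d_neg : ∀ i, d i < 0
  h_pos : ∀ j, 0 < h j
  /-- general position: no three vertices on a horizontal line -/
  d_inj : Function.Injective d
  h_inj : Function.Injective h
  /-- general position: no three vertices on a vertical line -/
  gen_pos : ∀ (i : Fin (m + 1)) (j : Fin (n + 1)), xs i = ys j →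
      (i = 0 ∧ j = 0) ∨ (i = Fin.last m ∧ j = Fin.last n)

/-- Among the reals in `A`, the one of minimum absolute value
(i.e. "closest to the base line"). -/
def closestToBase (A : Set ℝ) : ℝ :=
  sSup {y | y ∈ A ∧ ∀ y' ∈ A, |y| ≤ |y'|}

/-- The leftmost point of `S` among those minimizing the distance `|y|` to the base line. -/
def leftmostLowest (S : Set (ℝ × ℝ)) : ℝ × ℝ :=
  (sInf {x | ∃ y, (x, y) ∈ S ∧ ∀ q ∈ S, |y| ≤ |q.2|},
    closestToBase {y | (sInf {x | ∃ y', (x, y') ∈ S ∧ ∀ q ∈ S, |y'| ≤ |q.2|}, y) ∈ S})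

namespace DoubleHistogram

variable (H : DoubleHistogram)

/-- The polygon `P`, as a closed region of the plane. -/
def region : Set (ℝ × ℝ) :=
  (⋃ i : Fin H.m, Icc (H.xs i.castSucc) (H.xs i.succ) ×ˢ Icc (H.d i) 0) ∪
    ⋃ j : Fin H.n, Icc (H.ys j.castSucc) (H.ys j.succ) ×ˢ Icc 0 (H.h j)

/-- The vertex set `V(P)`. -/
def verts : Set (ℝ × ℝ) :=
  (⋃ i : Fin H.m,
      ({(H.xs i.castSucc, H.d i), (H.xs i.succ, H.d i)} : Set (ℝ × ℝ))) ∪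
    ⋃ j : Fin H.n,
      ({(H.ys j.castSucc, H.h j), (H.ys j.succ, H.h j)} : Set (ℝ × ℝ))

/-- `p` and `q` are co-visible: the axis-parallel rectangle they span lies in `P`. -/
def covisible (p q : ℝ × ℝ) : Prop :=
  Icc (min p.1 q.1) (max p.1 q.1) ×ˢ Icc (min p.2 q.2) (max p.2 q.2) ⊆ H.region

lemma covisible_symm {p q : ℝ × ℝ} (hpq : H.covisible p q) : H.covisible q p := by
  unfold covisible at hpq ⊢
  rwa [min_comm q.1 p.1, max_comm q.1 p.1, min_comm q.2 p.2, max_comm q.2 p.2]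

/-- The (unweighted) visibility graph `G(P)` on the vertices of `P`. -/
def visGraph : SimpleGraph ↥H.verts where
  Adj u v := u ≠ v ∧ H.covisible ↑u ↑v
  symm := ⟨fun _ _ hu => ⟨hu.1.symm, H.covisible_symm hu.2⟩⟩
  loopless := ⟨fun _ hu => hu.1 rfl⟩

/-- The closed neighborhood `N(v)`: `v` together with the vertices it sees. -/
def Nbr (v : ℝ × ℝ) : Set (ℝ × ℝ) :=
  {w | w ∈ H.verts ∧ (w = v ∨ H.covisible v w)}

/-- The abscissa where the leftward horizontal ray from `v` hits the boundary of `P`. -/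
def lhit (v : ℝ × ℝ) : ℝ :=
  sInf {x | x ≤ v.1 ∧ Icc x v.1 ×ˢ ({v.2} : Set ℝ) ⊆ H.region}

/-- The abscissa where the rightward horizontal ray from `v` hits the boundary of `P`. -/
def rhit (v : ℝ × ℝ) : ℝ :=
  sSup {x | v.1 ≤ x ∧ Icc v.1 x ×ˢ ({v.2} : Set ℝ) ⊆ H.region}

/-- The `y`-coordinate, among the vertices of `P` with abscissa `x` lying on the same side
of the base line as `side`, of the one closest to the base line (i.e. the endpoint of the
vertical edge at `x` closer to the base line). -/
def nearY (x : ℝ) (side : ℝ) : ℝ :=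
  if side < 0 then sSup {y | y < 0 ∧ (x, y) ∈ H.verts}
  else sInf {y | 0 < y ∧ (x, y) ∈ H.verts}

/-- The left point `ℓ(v)` (double-histogram version): if the leftward ray from `v` hits the
left boundary then the hit point, otherwise the endpoint of the hit vertical edge closer to
the base line. -/
def lpt (v : ℝ × ℝ) : ℝ × ℝ :=
  if H.lhit v = H.xs 0 then (H.xs 0, v.2) else (H.lhit v, H.nearY (H.lhit v) v.2)

/-- The right point `r(v)` (double-histogram version). -/
def rpt (v : ℝ × ℝ) : ℝ × ℝ :=
  if H.rhit v = H.xs (Fin.last H.m) then (H.xs (Fin.last H.m), v.2)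
  else (H.rhit v, H.nearY (H.rhit v) v.2)

/-- The left base vertex (for a simple histogram, i.e. `n = 1`). -/
def baseL : ℝ × ℝ := (H.xs 0, H.h ⟨0, H.hn⟩)

/-- The right base vertex (for a simple histogram, i.e. `n = 1`). -/
def baseR : ℝ × ℝ := (H.xs (Fin.last H.m), H.h ⟨0, H.hn⟩)

/-- The left point `ℓ(v)` (simple-histogram version): if the leftward ray from `v` hits the
left boundary then the left base vertex, otherwise the endpoint of the hit vertical edge
closer to the base edge. -/
def lptS (v : ℝ × ℝ) : ℝ × ℝ :=
  if H.lhit v = H.xs 0 then H.baseL else (H.lhit v, H.nearY (H.lhit v) v.2)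

/-- The right point `r(v)` (simple-histogram version). -/
def rptS (v : ℝ × ℝ) : ℝ × ℝ :=
  if H.rhit v = H.xs (Fin.last H.m) then H.baseR
  else (H.rhit v, H.nearY (H.rhit v) v.2)

/-- The interval `[p, q]`: all vertices of `P` between `p` and `q`. -/
def ivl (p q : ℝ × ℝ) : Set (ℝ × ℝ) :=
  {u | u ∈ H.verts ∧ p.1 ≤ u.1 ∧ u.1 ≤ q.1}

/-- The interval `I(v) = [ℓ(v), r(v)]` of a vertex (double-histogram version). -/
def Iv (v : ℝ × ℝ) : Set (ℝ × ℝ) := H.ivl (H.lpt v) (H.rpt v)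

/-- The interval `I(v) = [ℓ(v), r(v)]` of a vertex (simple-histogram version). -/
def IvS (v : ℝ × ℝ) : Set (ℝ × ℝ) := H.ivl (H.lptS v) (H.rptS v)

/-- The corresponding vertex `cv(v)`: the unique other vertex sharing a horizontal edge
(equivalently, by general position, the `y`-coordinate) with `v`. -/
def cv (v : ℝ × ℝ) : ℝ × ℝ :=
  (sSup {x | (x, v.2) ∈ H.verts ∧ x ≠ v.1}, v.2)

/-- `v` is a left vertex: the left endpoint of its horizontal edge. -/
def IsLeftVert (v : ℝ × ℝ) : Prop :=
  (∃ i : Fin H.m, v = (H.xs i.castSucc, H.d i)) ∨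
    ∃ j : Fin H.n, v = (H.ys j.castSucc, H.h j)

/-- `v` is a right vertex: the right endpoint of its horizontal edge. -/
def IsRightVert (v : ℝ × ℝ) : Prop :=
  (∃ i : Fin H.m, v = (H.xs i.succ, H.d i)) ∨
    ∃ j : Fin H.n, v = (H.ys j.succ, H.h j)

/-- `v` is an `ℓ`-reflex vertex (a left vertex with interior angle `3π/2`). -/
def IsLReflex (v : ℝ × ℝ) : Prop :=
  (∃ i : Fin H.m, ∃ _ : 0 < (i : ℕ),
      v = (H.xs i.castSucc, H.d i) ∧
        H.d ⟨(i : ℕ) - 1, lt_of_le_of_lt (Nat.sub_le _ _) i.isLt⟩ < H.d i) ∨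
    ∃ j : Fin H.n, ∃ _ : 0 < (j : ℕ),
      v = (H.ys j.castSucc, H.h j) ∧
        H.h j < H.h ⟨(j : ℕ) - 1, lt_of_le_of_lt (Nat.sub_le _ _) j.isLt⟩

/-- `v` is an `r`-reflex vertex (a right vertex with interior angle `3π/2`). -/
def IsRReflex (v : ℝ × ℝ) : Prop :=
  (∃ i : Fin H.m, ∃ hi : (i : ℕ) + 1 < H.m,
      v = (H.xs i.succ, H.d i) ∧ H.d ⟨(i : ℕ) + 1, hi⟩ < H.d i) ∨
    ∃ j : Fin H.n, ∃ hj : (j : ℕ) + 1 < H.n,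
      v = (H.ys j.succ, H.h j) ∧ H.h j < H.h ⟨(j : ℕ) + 1, hj⟩

/-- `v` is a reflex vertex. -/
def IsReflex (v : ℝ × ℝ) : Prop := H.IsLReflex v ∨ H.IsRReflex v

/-- The near dominator `nd(s,t)`: for `t` strictly right of `s`, the rightmost vertex of
`N(s)` to the left of `t`, ties broken towards the base line (symmetric otherwise). -/
def nd (s t : ℝ × ℝ) : ℝ × ℝ :=
  if s.1 < t.1 then
    let nx := sSup {x | (∃ y, (x, y) ∈ H.Nbr s) ∧ x ≤ t.1}
    (nx, closestToBase {y | (nx, y) ∈ H.Nbr s})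
  else
    let nx := sInf {x | (∃ y, (x, y) ∈ H.Nbr s) ∧ t.1 ≤ x}
    (nx, closestToBase {y | (nx, y) ∈ H.Nbr s})

/-- The far dominator `fd(s,t)`: for `t` strictly right of `s`, the leftmost vertex of
`N(s)` to the right of `t`, ties broken towards the base line; if there is no such vertex,
the point `r(s)` (symmetric otherwise). -/
def fd (s t : ℝ × ℝ) : ℝ × ℝ :=
  if s.1 < t.1 then
    if ∃ w ∈ H.Nbr s, t.1 ≤ w.1 then
      let nx := sInf {x | (∃ y, (x, y) ∈ H.Nbr s) ∧ t.1 ≤ x}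
      (nx, closestToBase {y | (nx, y) ∈ H.Nbr s})
    else H.rpt s
  else
    if ∃ w ∈ H.Nbr s, w.1 ≤ t.1 then
      let nx := sSup {x | (∃ y, (x, y) ∈ H.Nbr s) ∧ x ≤ t.1}
      (nx, closestToBase {y | (nx, y) ∈ H.Nbr s})
    else H.lpt s

/-- The sequence `a^i(s)`: `a^0(s) = s`, and `a^i(s)` is the leftmost vertex of
`A^i(s) = {v ∈ N(s) : ℓ(v)_x < ℓ(a^{i-1}(s))_x}` (ties towards the base line),
or `a^{i-1}(s)` if `A^i(s)` is empty. -/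
def aSeq (s : ℝ × ℝ) : ℕ → ℝ × ℝ := fun k =>
  Nat.rec (motive := fun _ => ℝ × ℝ) s
    (fun _ prev =>
      let A : Set (ℝ × ℝ) := {v | v ∈ H.Nbr s ∧ (H.lpt v).1 < (H.lpt prev).1}
      if A = ∅ then prev
      else
        let ax := sInf {x | ∃ y, (x, y) ∈ A}
        (ax, closestToBase {y | (ax, y) ∈ A}))
    k

/-- The sequence `b^i(s)`: `b^0(s) = s`, and `b^i(s)` is the rightmost vertex of
`B^i(s) = {v ∈ N(s) : r(v)_x > r(b^{i-1}(s))_x}` (ties towards the base line),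
or `b^{i-1}(s)` if `B^i(s)` is empty. -/
def bSeq (s : ℝ × ℝ) : ℕ → ℝ × ℝ := fun k =>
  Nat.rec (motive := fun _ => ℝ × ℝ) s
    (fun _ prev =>
      let B : Set (ℝ × ℝ) := {v | v ∈ H.Nbr s ∧ (H.rpt prev).1 < (H.rpt v).1}
      if B = ∅ then prev
      else
        let bx := sSup {x | ∃ y, (x, y) ∈ B}
        (bx, closestToBase {y | (bx, y) ∈ B}))
    k

/-- The pair of the `k`-th bottom dominator `bd^k(s)` and `k`-th top dominator `td^k(s)`:
`bd^0(s) = td^0(s) = s`; for `k > 0`, with `I^k(s) = I(bd^{k-1}(s)) ∪ I(td^{k-1}(s))`,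
`bd^k(s)` is the leftmost vertex of `I^k(s)⁻` minimizing the distance to the base line,
and `td^k(s)` the leftmost vertex of `I^k(s)⁺` minimizing the distance to the base line;
if one of the two sets is empty, the corresponding dominator equals the other one. -/
def bdtd (s : ℝ × ℝ) : ℕ → (ℝ × ℝ) × (ℝ × ℝ) := fun k =>
  Nat.rec (motive := fun _ => (ℝ × ℝ) × (ℝ × ℝ)) (s, s)
    (fun _ p =>
      let J : Set (ℝ × ℝ) := H.Iv p.1 ∪ H.Iv p.2
      let Jm : Set (ℝ × ℝ) := {v | v ∈ J ∧ v.2 < 0}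
      let Jp : Set (ℝ × ℝ) := {v | v ∈ J ∧ 0 < v.2}
      if Jm = ∅ then (leftmostLowest Jp, leftmostLowest Jp)
      else if Jp = ∅ then (leftmostLowest Jm, leftmostLowest Jm)
      else (leftmostLowest Jm, leftmostLowest Jp))
    k

/-- The `k`-th interval `I^k(s)`: `I^0(s) = {s}` and
`I^{k+1}(s) = I(bd^k(s)) ∪ I(td^k(s))`. -/
def Ipow (s : ℝ × ℝ) : ℕ → Set (ℝ × ℝ) := fun k =>
  Nat.rec (motive := fun _ => Set (ℝ × ℝ)) {s}
    (fun k _ => H.Iv (H.bdtd s k).1 ∪ H.Iv (H.bdtd s k).2) k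

/-- `w` lies on a shortest path from `s` to `t` in the visibility graph. -/
def OnShortestPath (s t w : ↥H.verts) : Prop :=
  ∃ p : H.visGraph.Walk s t, p.length = H.visGraph.dist s t ∧ w ∈ p.support

end DoubleHistogram

/-- A routing scheme for a graph `G`: every vertex carries a binary label and a binary
routing table, and the routing function maps (link table of the current vertex, routing
table of the current vertex, label of the target, current header) to the next vertex
together with the new header. -/
structure RoutingScheme {V : Type} (G : SimpleGraph V) where
  lab : V → List Bool
  tab : V → List Bool
  route : Set (List Bool) → List Bool → List Bool → List Bool → V × List Bool

namespace RoutingScheme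

variable {V : Type} {G : SimpleGraph V} (R : RoutingScheme G)

/-- One routing step at vertex `p` with header `h`, towards the target `t`: the routing
function is applied to the link table of `p` (the labels of its closed neighborhood),
the routing table of `p`, the label of `t` and the header `h`. -/
def step (t p : V) (h : List Bool) : V × List Bool :=
  R.route (R.lab '' {w | w = p ∨ G.Adj p w}) (R.tab p) (R.lab t) h

/-- The routing sequence from `s` towards `t`, starting with the empty header. -/
def seq (s t : V) : ℕ → V × List Bool := fun k =>
  Nat.rec (motive := fun _ => V × List Bool) (s, ([] : List Bool))
    (fun _ q => R.step t q.1 q.2) k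

end RoutingScheme

/-!
The chord of a vertex `v` is the interval `[ℓ(v)_x, r(v)_x]` swept by the maximal horizontal
segment of `P` through `v`. Below the base edge a simple histogram is closed upwards, so a vertex
`p` sees a vertex `q` at least as high iff `q_x` lies in the chord of `p`, and the chord of a
vertex contains the chord of every lower vertex that it meets. Consequently, if `g` is the highest
vertex over the chord of `s`, every vertex `l` over that chord seeing a vertex `c` outside it lies
above `s`, and `g` sees `c` as well. A shortest path from `s` to `t` leaves the chord of `s` along
such an edge `l c`, and replacing its part up to `l` by `s g` does not lengthen it. Finally, the
only vertices over the chord of a bottom vertex `s` lying above `s` are `ℓ(s)` and `r(s)`, so the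
higher of the two is `g`.
-/

section ClosedIntervals

variable {α : Type*} [ConditionallyCompleteLinearOrder α] [TopologicalSpace α] [OrderTopology α]
  {C : Set α} {b : α}

theorem Icc_csInf_subset_of_isClosed (hC : IsClosed C) (hb : b ∈ C)
    (hbdd : BddBelow {x | x ≤ b ∧ Icc x b ⊆ C}) :
    Icc (sInf {x | x ≤ b ∧ Icc x b ⊆ C}) b ⊆ C := by
  set S := {x | x ≤ b ∧ Icc x b ⊆ C}
  have hS : S.Nonempty := ⟨b, le_rfl, by simpa using hb⟩
  rintro y ⟨hy₁, hy₂⟩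
  rcases hy₁.eq_or_lt with rfl | hlt
  · exact hC.closure_subset_iff.2 (fun x hx => hx.2 ⟨le_rfl, hx.1⟩) (csInf_mem_closure hS hbdd)
  · obtain ⟨x, hx, hxy⟩ := exists_lt_of_csInf_lt hS hlt
    exact hx.2 ⟨hxy.le, hy₂⟩

theorem Icc_csSup_subset_of_isClosed (hC : IsClosed C) (hb : b ∈ C)
    (hbdd : BddAbove {x | b ≤ x ∧ Icc b x ⊆ C}) :
    Icc b (sSup {x | b ≤ x ∧ Icc b x ⊆ C}) ⊆ C := by
  set S := {x | b ≤ x ∧ Icc b x ⊆ C}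
  have hS : S.Nonempty := ⟨b, le_rfl, by simpa using hb⟩
  rintro y ⟨hy₁, hy₂⟩
  rcases hy₂.eq_or_lt with rfl | hlt
  · exact hC.closure_subset_iff.2 (fun x hx => hx.2 ⟨hx.1, le_rfl⟩) (csSup_mem_closure hS hbdd)
  · obtain ⟨x, hx, hxy⟩ := exists_lt_of_lt_csSup hS hlt
    exact hx.2 ⟨hy₁, hxy.le⟩

end ClosedIntervals

theorem SimpleGraph.Walk.exists_eq_append_cons_of_boundary {V : Type*} {G : SimpleGraph V}
    (P : V → Prop) {u v : V} (p : G.Walk u v) (hu : P u) (hv : ¬ P v) :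
    ∃ (b c : V) (w₁ : G.Walk u b) (h : G.Adj b c) (w₂ : G.Walk c v),
      P b ∧ ¬ P c ∧ p = w₁.append (cons h w₂) := by
  induction p with
  | nil => exact absurd hu hv
  | @cons u w v h q ih =>
    by_cases hw : P w
    · obtain ⟨b, c, w₁, hbc, w₂, hb, hc, rfl⟩ := ih hw hv
      exact ⟨b, c, cons h w₁, hbc, w₂, hb, hc, rfl⟩
    · exact ⟨u, w, nil, h, q, hu, hw, rfl⟩

namespace DoubleHistogram

variable {H : DoubleHistogram}

def baseHeight (H : DoubleHistogram) : ℝ := H.h ⟨0, H.hn⟩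

def row (H : DoubleHistogram) (y : ℝ) : Set ℝ := {x | (x, y) ∈ H.region}

def chord (H : DoubleHistogram) (v : ℝ × ℝ) : Set ℝ := Icc (H.lhit v) (H.rhit v)

lemma baseHeight_pos : 0 < H.baseHeight := H.h_pos _

lemma isClosed_row (y : ℝ) : IsClosed (H.row y) := by
  refine IsClosed.preimage (continuous_id.prodMk continuous_const) ?_
  exact (isClosed_iUnion_of_finite fun _ => isClosed_Icc.prod isClosed_Icc).union
    (isClosed_iUnion_of_finite fun _ => isClosed_Icc.prod isClosed_Icc)

lemma row_subset_Icc (y : ℝ) : H.row y ⊆ Icc (H.xs 0) (H.xs (Fin.last H.m)) := by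
  rintro x (hx | hx)
  · obtain ⟨i, ⟨hx₁, hx₂⟩, -⟩ := mem_iUnion.1 hx
    exact ⟨(H.xs_mono.monotone (Fin.zero_le _)).trans hx₁,
      hx₂.trans (H.xs_mono.monotone (Fin.le_last _))⟩
  · obtain ⟨j, ⟨hx₁, hx₂⟩, -⟩ := mem_iUnion.1 hx
    rw [← H.left_eq, ← H.right_eq]
    exact ⟨(H.ys_mono.monotone (Fin.zero_le _)).trans hx₁,
      hx₂.trans (H.ys_mono.monotone (Fin.le_last _))⟩

lemma Icc_subset_row_d (i : Fin H.m) : Icc (H.xs i.castSucc) (H.xs i.succ) ⊆ H.row (H.d i) :=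
  fun _ hx => Or.inl (mem_iUnion.2 ⟨i, hx, le_rfl, (H.d_neg i).le⟩)

lemma succ_zero_eq_last (hn : H.n = 1) : (⟨0, H.hn⟩ : Fin H.n).succ = Fin.last H.n :=
  Fin.ext (by simp [hn])

lemma xs_castSucc_lt_succ (i : Fin H.m) : H.xs i.castSucc < H.xs i.succ :=
  H.xs_mono Fin.castSucc_lt_succ

lemma xs_castSucc_mem_Icc (i : Fin H.m) : H.xs i.castSucc ∈ Icc (H.xs i.castSucc) (H.xs i.succ) :=
  left_mem_Icc.2 (xs_castSucc_lt_succ i).le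

lemma xs_succ_mem_Icc (i : Fin H.m) : H.xs i.succ ∈ Icc (H.xs i.castSucc) (H.xs i.succ) :=
  right_mem_Icc.2 (xs_castSucc_lt_succ i).le

lemma Icc_subset_row_of_nonneg (hn : H.n = 1) {y : ℝ} (hy₀ : 0 ≤ y) (hy : y ≤ H.baseHeight) :
    Icc (H.xs 0) (H.xs (Fin.last H.m)) ⊆ H.row y := by
  intro x ⟨hx₁, hx₂⟩
  refine Or.inr (mem_iUnion.2 ⟨⟨0, H.hn⟩, ⟨?_, ?_⟩, hy₀, hy⟩)
  · exact H.left_eq.trans_le hx₁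
  · rw [succ_zero_eq_last hn, H.right_eq]; exact hx₂

lemma row_mono (hn : H.n = 1) {y y' : ℝ} (h : y ≤ y') (h' : y' ≤ H.baseHeight) :
    H.row y ⊆ H.row y' := by
  intro x hx
  rcases le_or_gt y' 0 with hy' | hy'
  · rcases hx with hx | hx
    · obtain ⟨i, hxi, hyi, -⟩ := mem_iUnion.1 hx
      exact Or.inl (mem_iUnion.2 ⟨i, hxi, hyi.trans h, hy'⟩)
    · obtain ⟨j, -, hyj, -⟩ := mem_iUnion.1 hx
      exact Icc_subset_row_of_nonneg hn (hyj.trans h) h' (row_subset_Icc y (Or.inr hx))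
  · exact Icc_subset_row_of_nonneg hn hy'.le h' (row_subset_Icc y hx)

lemma exists_col_of_mem_row {x y : ℝ} (hy : y < 0) (hx : x ∈ H.row y) :
    ∃ i : Fin H.m, x ∈ Icc (H.xs i.castSucc) (H.xs i.succ) ∧ H.d i ≤ y := by
  rcases hx with hx | hx
  · obtain ⟨i, hxi, hyi, -⟩ := mem_iUnion.1 hx
    exact ⟨i, hxi, hyi⟩
  · obtain ⟨j, -, hyj, -⟩ := mem_iUnion.1 hx
    exact absurd hyj hy.not_ge

lemma d_le_of_mem_row {i : Fin H.m} {x y : ℝ} (hy : y < 0)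
    (hxi : x ∈ Ioo (H.xs i.castSucc) (H.xs i.succ)) (hx : x ∈ H.row y) : H.d i ≤ y := by
  obtain ⟨j, ⟨hxj₁, hxj₂⟩, hdj⟩ := exists_col_of_mem_row hy hx
  obtain rfl : j = i := by
    by_contra hji
    rcases lt_or_gt_of_ne hji with h | h
    · linarith [hxi.1, H.xs_mono.monotone (Fin.succ_le_castSucc_iff.2 h)]
    · linarith [hxi.2, H.xs_mono.monotone (Fin.succ_le_castSucc_iff.2 h)]
  exact hdj

lemma mem_verts_iff (hn : H.n = 1) {v : ℝ × ℝ} :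
    v ∈ H.verts ↔ (∃ i : Fin H.m, v = (H.xs i.castSucc, H.d i) ∨ v = (H.xs i.succ, H.d i)) ∨
      v = H.baseL ∨ v = H.baseR := by
  have htop : (∃ j : Fin H.n, v = (H.ys j.castSucc, H.h j) ∨ v = (H.ys j.succ, H.h j)) ↔
      v = H.baseL ∨ v = H.baseR := by
    have hzero : (⟨0, H.hn⟩ : Fin H.n).castSucc = 0 := rfl
    rw [baseL, baseR, ← H.left_eq, ← H.right_eq, ← succ_zero_eq_last hn, ← hzero]
    exact ⟨fun ⟨j, hj⟩ => (Fin.ext (by omega) : j = ⟨0, H.hn⟩) ▸ hj, fun h => ⟨_, h⟩⟩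
  simp only [verts, mem_union, mem_iUnion, mem_insert_iff, mem_singleton_iff, htop]

lemma baseL_mem_verts (hn : H.n = 1) : H.baseL ∈ H.verts :=
  (mem_verts_iff hn).2 (Or.inr (Or.inl rfl))

lemma baseR_mem_verts (hn : H.n = 1) : H.baseR ∈ H.verts :=
  (mem_verts_iff hn).2 (Or.inr (Or.inr rfl))

lemma left_corner_mem_verts (i : Fin H.m) : (H.xs i.castSucc, H.d i) ∈ H.verts :=
  Or.inl (mem_iUnion.2 ⟨i, Or.inl rfl⟩)

lemma right_corner_mem_verts (i : Fin H.m) : (H.xs i.succ, H.d i) ∈ H.verts :=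
  Or.inl (mem_iUnion.2 ⟨i, Or.inr rfl⟩)

variable {s v b : ℝ × ℝ}

lemma snd_neg_or_eq_base (hn : H.n = 1) (hv : v ∈ H.verts) :
    v.2 < 0 ∨ v = H.baseL ∨ v = H.baseR := by
  rcases (mem_verts_iff hn).1 hv with ⟨i, rfl | rfl⟩ | h
  exacts [Or.inl (H.d_neg i), Or.inl (H.d_neg i), Or.inr h]

lemma snd_le_baseHeight (hn : H.n = 1) (hv : v ∈ H.verts) : v.2 ≤ H.baseHeight := by
  rcases snd_neg_or_eq_base hn hv with h | rfl | rfl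
  exacts [h.le.trans baseHeight_pos.le, le_rfl, le_rfl]

lemma exists_col_of_snd_neg (hn : H.n = 1) (hv : v ∈ H.verts) (hv₀ : v.2 < 0) :
    ∃ i : Fin H.m, (v.1 = H.xs i.castSucc ∨ v.1 = H.xs i.succ) ∧ v.2 = H.d i := by
  rcases (mem_verts_iff hn).1 hv with ⟨i, rfl | rfl⟩ | rfl | rfl
  · exact ⟨i, Or.inl rfl, rfl⟩
  · exact ⟨i, Or.inr rfl, rfl⟩
  all_goals exact absurd baseHeight_pos hv₀.not_gt

lemma fst_mem_row (hn : H.n = 1) (hv : v ∈ H.verts) : v.1 ∈ H.row v.2 := by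
  rcases (mem_verts_iff hn).1 hv with ⟨i, rfl | rfl⟩ | rfl | rfl
  · exact Icc_subset_row_d i (xs_castSucc_mem_Icc _)
  · exact Icc_subset_row_d i (xs_succ_mem_Icc _)
  · exact Icc_subset_row_of_nonneg hn baseHeight_pos.le le_rfl
      (left_mem_Icc.2 (H.xs_mono.monotone (Fin.zero_le _)))
  · exact Icc_subset_row_of_nonneg hn baseHeight_pos.le le_rfl
      (right_mem_Icc.2 (H.xs_mono.monotone (Fin.zero_le _)))

lemma prod_singleton_subset_region_iff {I : Set ℝ} {y : ℝ} :
    I ×ˢ {y} ⊆ H.region ↔ I ⊆ H.row y :=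
  ⟨fun h _ hx => h ⟨hx, rfl⟩, by rintro h ⟨x, y⟩ ⟨hx, rfl : y = _⟩; exact h hx⟩

lemma lhit_eq (v : ℝ × ℝ) : H.lhit v = sInf {x | x ≤ v.1 ∧ Icc x v.1 ⊆ H.row v.2} := by
  simp only [lhit, prod_singleton_subset_region_iff]

lemma rhit_eq (v : ℝ × ℝ) : H.rhit v = sSup {x | v.1 ≤ x ∧ Icc v.1 x ⊆ H.row v.2} := by
  simp only [rhit, prod_singleton_subset_region_iff]

lemma bddBelow_lhit (v : ℝ × ℝ) : BddBelow {x | x ≤ v.1 ∧ Icc x v.1 ⊆ H.row v.2} :=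
  ⟨H.xs 0, fun _ hx => (row_subset_Icc _ (hx.2 ⟨le_rfl, hx.1⟩)).1⟩

lemma bddAbove_rhit (v : ℝ × ℝ) : BddAbove {x | v.1 ≤ x ∧ Icc v.1 x ⊆ H.row v.2} :=
  ⟨H.xs (Fin.last H.m), fun _ hx => (row_subset_Icc _ (hx.2 ⟨hx.1, le_rfl⟩)).2⟩

lemma Icc_subset_chord {a c : ℝ} (h : Icc a c ⊆ H.row v.2) (hv : v.1 ∈ Icc a c) :
    Icc a c ⊆ H.chord v :=
  Icc_subset_Icc
    (lhit_eq v ▸ csInf_le (bddBelow_lhit v) ⟨hv.1, (Icc_subset_Icc_right hv.2).trans h⟩)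
    (rhit_eq v ▸ le_csSup (bddAbove_rhit v) ⟨hv.2, (Icc_subset_Icc_left hv.1).trans h⟩)

lemma fst_mem_chord (hv : v.1 ∈ H.row v.2) : v.1 ∈ H.chord v :=
  Icc_subset_chord (a := v.1) (c := v.1) (by simpa using hv) ⟨le_rfl, le_rfl⟩ ⟨le_rfl, le_rfl⟩

lemma lhit_mem_chord (hv : v.1 ∈ H.row v.2) : H.lhit v ∈ H.chord v :=
  left_mem_Icc.2 ((fst_mem_chord hv).1.trans (fst_mem_chord hv).2)

lemma rhit_mem_chord (hv : v.1 ∈ H.row v.2) : H.rhit v ∈ H.chord v :=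
  right_mem_Icc.2 ((fst_mem_chord hv).1.trans (fst_mem_chord hv).2)

lemma chord_subset_row (hv : v.1 ∈ H.row v.2) : H.chord v ⊆ H.row v.2 := by
  have hv' := fst_mem_chord hv
  rw [chord, ← Icc_union_Icc_eq_Icc hv'.1 hv'.2]
  refine union_subset ?_ ?_
  · simpa only [lhit_eq] using Icc_csInf_subset_of_isClosed (isClosed_row _) hv (bddBelow_lhit v)
  · simpa only [rhit_eq] using Icc_csSup_subset_of_isClosed (isClosed_row _) hv (bddAbove_rhit v)

lemma Icc_subset_chord_of_mem {a c x : ℝ} (hv : v.1 ∈ H.row v.2) (h : Icc a c ⊆ H.row v.2)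
    (hx : x ∈ Icc a c) (hxv : x ∈ H.chord v) : Icc a c ⊆ H.chord v := by
  have hunion := Icc_union_Icc' (hxv.1.trans hx.2) (hx.1.trans hxv.2)
  refine subset_union_left.trans (hunion ▸ Icc_subset_chord ?_ ?_)
  · exact hunion ▸ union_subset h (chord_subset_row hv)
  · exact hunion ▸ Or.inr (fst_mem_chord hv)

lemma chord_subset_Icc (hv : v.1 ∈ H.row v.2) : H.chord v ⊆ Icc (H.xs 0) (H.xs (Fin.last H.m)) :=
  (chord_subset_row hv).trans (row_subset_Icc _)

lemma Icc_subset_chord_of_snd_eq (hn : H.n = 1) (hv : v ∈ H.verts) (hv₂ : v.2 = H.baseHeight) :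
    Icc (H.xs 0) (H.xs (Fin.last H.m)) ⊆ H.chord v :=
  Icc_subset_chord (hv₂ ▸ Icc_subset_row_of_nonneg hn baseHeight_pos.le le_rfl)
    (row_subset_Icc _ (fst_mem_row hn hv))

lemma fst_mem_chord_of_mem_verts (hn : H.n = 1) (hv : v ∈ H.verts) : v.1 ∈ H.chord v :=
  fst_mem_chord (fst_mem_row hn hv)

lemma chord_subset_chord (hn : H.n = 1) {u w : ℝ × ℝ} (hu : u ∈ H.verts) (hw : w ∈ H.verts)
    (h : u.2 ≤ w.2) {x : ℝ} (hxu : x ∈ H.chord u) (hxw : x ∈ H.chord w) :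
    H.chord u ⊆ H.chord w :=
  Icc_subset_chord_of_mem (fst_mem_row hn hw)
    ((chord_subset_row (fst_mem_row hn hu)).trans (row_mono hn h (snd_le_baseHeight hn hw)))
    hxu hxw

lemma covisible_iff_of_le (hn : H.n = 1) {p q : ℝ × ℝ} (hp : p ∈ H.verts) (hq : q ∈ H.verts)
    (h : p.2 ≤ q.2) : H.covisible p q ↔ q.1 ∈ H.chord p := by
  rw [covisible, min_eq_left h, max_eq_right h]
  constructor
  · intro hcov
    have hrow : Icc (min p.1 q.1) (max p.1 q.1) ⊆ H.row p.2 :=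
      fun x hx => hcov ⟨hx, left_mem_Icc.2 h⟩
    exact Icc_subset_chord hrow ⟨min_le_left _ _, le_max_left _ _⟩
      ⟨min_le_right _ _, le_max_right _ _⟩
  · rintro hq₁ ⟨x, y⟩ ⟨hx, hy₁, hy₂⟩
    have hp₁ := fst_mem_chord_of_mem_verts hn hp
    have hx' : x ∈ H.chord p := Icc_subset_Icc (le_min hp₁.1 hq₁.1) (max_le hp₁.2 hq₁.2) hx
    exact row_mono hn hy₁ (hy₂.trans (snd_le_baseHeight hn hq))
      (chord_subset_row (fst_mem_row hn hp) hx')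

lemma mem_chord_of_covisible (hn : H.n = 1) {p q : ℝ × ℝ} (hp : p ∈ H.verts)
    (hq : q ∈ H.verts) (h : H.covisible p q) : q.1 ∈ H.chord p := by
  rcases le_total p.2 q.2 with hpq | hqp
  · exact (covisible_iff_of_le hn hp hq hpq).1 h
  · refine chord_subset_chord hn hq hp hqp ?_ (fst_mem_chord_of_mem_verts hn hp)
      (fst_mem_chord_of_mem_verts hn hq)
    exact (covisible_iff_of_le hn hq hp hqp).1 (H.covisible_symm h)

lemma covisible_iff_mem_chord (hn : H.n = 1) {p q : ℝ × ℝ} (hp : p ∈ H.verts)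
    (hq : q ∈ H.verts) : H.covisible p q ↔ q.1 ∈ H.chord p ∧ p.1 ∈ H.chord q := by
  refine ⟨fun h => ⟨mem_chord_of_covisible hn hp hq h,
    mem_chord_of_covisible hn hq hp (H.covisible_symm h)⟩, fun ⟨hqp, hpq⟩ => ?_⟩
  rcases le_total p.2 q.2 with h | h
  · exact (covisible_iff_of_le hn hp hq h).2 hqp
  · exact H.covisible_symm ((covisible_iff_of_le hn hq hp h).2 hpq)

lemma lt_snd_of_covisible (hn : H.n = 1) {p q : ℝ × ℝ} (hs : s ∈ H.verts) (hp : p ∈ H.verts)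
    (hq : q ∈ H.verts) (h : H.covisible p q) (hp₁ : p.1 ∈ H.chord s) (hq₁ : q.1 ∉ H.chord s) :
    s.2 < p.2 ∧ s.2 < q.2 := by
  obtain ⟨hqp, hpq⟩ := (covisible_iff_mem_chord hn hp hq).1 h
  have key : ∀ u ∈ H.verts, u.2 ≤ s.2 → p.1 ∈ H.chord u → q.1 ∉ H.chord u :=
    fun u hu hus hpu hqu => hq₁ (chord_subset_chord hn hu hs hus hpu hp₁ hqu)
  exact ⟨lt_of_not_ge fun hps => key p hp hps (fst_mem_chord_of_mem_verts hn hp) hqp,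
    lt_of_not_ge fun hqs => key q hq hqs hpq (fst_mem_chord_of_mem_verts hn hq)⟩

lemma covisible_of_le_snd (hn : H.n = 1) {l g c : ℝ × ℝ} (hs : s ∈ H.verts) (hl : l ∈ H.verts)
    (hg : g ∈ H.verts) (hc : c ∈ H.verts) (hl₁ : l.1 ∈ H.chord s) (hg₁ : g.1 ∈ H.chord s)
    (hlg : l.2 ≤ g.2) (hc₁ : c.1 ∉ H.chord s) (hlc : H.covisible l c) : H.covisible g c := by
  obtain ⟨hsl, hsc⟩ := lt_snd_of_covisible hn hs hl hc hlc hl₁ hc₁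
  obtain ⟨hcl, hlc'⟩ := (covisible_iff_mem_chord hn hl hc).1 hlc
  have hsl' := chord_subset_chord hn hs hl hsl.le hl₁ (fst_mem_chord_of_mem_verts hn hl)
  have hsc' := chord_subset_chord hn hs hc hsc.le hl₁ hlc'
  have hlg' := chord_subset_chord hn hl hg hlg (hsl' hg₁) (fst_mem_chord_of_mem_verts hn hg)
  exact (covisible_iff_mem_chord hn hg hc).2 ⟨hlg' hcl, hsc' hg₁⟩

lemma lptS_fst (v : ℝ × ℝ) : (H.lptS v).1 = H.lhit v := by
  unfold lptS
  split_ifs with h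
  exacts [h.symm, rfl]

lemma rptS_fst (v : ℝ × ℝ) : (H.rptS v).1 = H.rhit v := by
  unfold rptS
  split_ifs with h
  exacts [h.symm, rfl]

lemma col_subset_chord (hn : H.n = 1) (hs : s ∈ H.verts) {i : Fin H.m} (hi : H.d i ≤ s.2)
    {x : ℝ} (hx : x ∈ Icc (H.xs i.castSucc) (H.xs i.succ)) (hxs : x ∈ H.chord s) :
    Icc (H.xs i.castSucc) (H.xs i.succ) ⊆ H.chord s :=
  Icc_subset_chord_of_mem (fst_mem_row hn hs)
    ((Icc_subset_row_d i).trans (row_mono hn hi (snd_le_baseHeight hn hs))) hx hxs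

section BottomVertex

variable (hn : H.n = 1) (hs : s ∈ H.verts) (hs₀ : s.2 < 0)
include hn hs hs₀

lemma lhit_lt_rhit : H.lhit s < H.rhit s := by
  obtain ⟨i, hsi, hsd⟩ := exists_col_of_snd_neg hn hs hs₀
  have hlt := xs_castSucc_lt_succ i
  have hcol := col_subset_chord hn hs hsd.ge (x := s.1)
    (by rcases hsi with h | h <;> rw [h] <;> simp [hlt.le]) (fst_mem_chord_of_mem_verts hn hs)
  exact (hcol (left_mem_Icc.2 hlt.le)).1.trans_lt (hlt.trans_le (hcol (right_mem_Icc.2 hlt.le)).2)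

lemma d_le_of_lt_rhit_of_lhit_lt {i : Fin H.m} (h₁ : H.xs i.castSucc < H.rhit s)
    (h₂ : H.lhit s < H.xs i.succ) : H.d i ≤ s.2 := by
  obtain ⟨x, hx₁, hx₂⟩ := exists_between (max_lt (lt_min (xs_castSucc_lt_succ _) h₁)
    (lt_min h₂ (lhit_lt_rhit hn hs hs₀)))
  exact d_le_of_mem_row hs₀ ⟨(le_max_left _ _).trans_lt hx₁, hx₂.trans_le (min_le_left _ _)⟩
    (chord_subset_row (fst_mem_row hn hs)
      ⟨(le_max_right _ _).trans hx₁.le, hx₂.le.trans (min_le_right _ _)⟩)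

lemma exists_col_of_lt_snd (hb : b ∈ H.verts) (hb₀ : b.2 < 0) (hsb : s.2 < b.2)
    (hb₁ : b.1 ∈ H.chord s) :
    ∃ i : Fin H.m, b.2 = H.d i ∧
      (b.1 = H.xs i.succ ∧ b.1 = H.lhit s ∨ b.1 = H.xs i.castSucc ∧ b.1 = H.rhit s) := by
  obtain ⟨i, hbi, hbd⟩ := exists_col_of_snd_neg hn hb hb₀
  have hlt := xs_castSucc_lt_succ i
  have hcol : ¬ (H.xs i.castSucc < H.rhit s ∧ H.lhit s < H.xs i.succ) :=
    fun h => (hbd ▸ hsb).not_ge (d_le_of_lt_rhit_of_lhit_lt hn hs hs₀ h.1 h.2)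
  refine ⟨i, hbd, ?_⟩
  rcases hbi with h | h
  · refine Or.inr ⟨h, le_antisymm hb₁.2 (le_of_not_gt fun hr => hcol ⟨?_, ?_⟩)⟩ <;>
      linarith [hb₁.1]
  · refine Or.inl ⟨h, le_antisymm (le_of_not_gt fun hl => hcol ⟨?_, ?_⟩) hb₁.1⟩ <;>
      linarith [hb₁.2]

lemma fst_eq_lhit_or_rhit (hb : b ∈ H.verts) (hsb : s.2 < b.2) (hb₁ : b.1 ∈ H.chord s) :
    b.1 = H.lhit s ∨ b.1 = H.rhit s := by
  have hbd := chord_subset_Icc (fst_mem_row hn hs) (lhit_mem_chord (fst_mem_row hn hs))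
  have hbu := chord_subset_Icc (fst_mem_row hn hs) (rhit_mem_chord (fst_mem_row hn hs))
  rcases snd_neg_or_eq_base hn hb with hb₀ | rfl | rfl
  · obtain ⟨i, -, ⟨-, h⟩ | ⟨-, h⟩⟩ := exists_col_of_lt_snd hn hs hs₀ hb hb₀ hsb hb₁
    exacts [Or.inl h, Or.inr h]
  · exact Or.inl (le_antisymm hbd.1 hb₁.1)
  · exact Or.inr (le_antisymm hb₁.2 hbu.2)

lemma exists_succ_eq_lhit (hb : b ∈ H.verts) (hb₀ : b.2 < 0) (hsb : s.2 < b.2)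
    (hb₁ : b.1 = H.lhit s) : ∃ i : Fin H.m, H.xs i.succ = H.lhit s ∧ b.2 = H.d i := by
  obtain ⟨i, hbi, ⟨h, -⟩ | ⟨-, h⟩⟩ := exists_col_of_lt_snd hn hs hs₀ hb hb₀ hsb
    (hb₁ ▸ lhit_mem_chord (fst_mem_row hn hs))
  exacts [⟨i, h ▸ hb₁, hbi⟩, absurd (h.symm.trans hb₁) (lhit_lt_rhit hn hs hs₀).ne']

lemma exists_castSucc_eq_rhit (hb : b ∈ H.verts) (hb₀ : b.2 < 0) (hsb : s.2 < b.2)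
    (hb₁ : b.1 = H.rhit s) : ∃ i : Fin H.m, H.xs i.castSucc = H.rhit s ∧ b.2 = H.d i := by
  obtain ⟨i, hbi, ⟨-, h⟩ | ⟨h, -⟩⟩ := exists_col_of_lt_snd hn hs hs₀ hb hb₀ hsb
    (hb₁ ▸ rhit_mem_chord (fst_mem_row hn hs))
  exacts [absurd (h.symm.trans hb₁) (lhit_lt_rhit hn hs hs₀).ne, ⟨i, h ▸ hb₁, hbi⟩]

lemma lptS_eq_of_fst_eq_lhit (hb : b ∈ H.verts) (hsb : s.2 < b.2) (hb₁ : b.1 = H.lhit s) :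
    H.lptS s = b := by
  have hlr := lhit_lt_rhit hn hs hs₀
  rcases snd_neg_or_eq_base hn hb with hb₀ | rfl | rfl
  · obtain ⟨i, hi, hbi⟩ := exists_succ_eq_lhit hn hs hs₀ hb hb₀ hsb hb₁
    have hgreatest : IsGreatest {y | y < 0 ∧ (H.lhit s, y) ∈ H.verts} b.2 := by
      refine ⟨⟨hb₀, hb₁ ▸ hb⟩, fun y ⟨hy₀, hy⟩ => le_of_not_gt fun hby => ?_⟩
      obtain ⟨j, hj, hyj⟩ := exists_succ_eq_lhit hn hs hs₀ hy hy₀ (hsb.trans hby) rfl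
      obtain rfl : j = i := Fin.succ_injective _ (H.xs_mono.injective (hj.trans hi.symm))
      exact hby.ne' (hyj.trans hbi.symm)
    have hne : H.lhit s ≠ H.xs 0 := hi ▸ (H.xs_mono (Fin.succ_pos i)).ne'
    rw [lptS, if_neg hne, nearY, if_pos hs₀, hgreatest.csSup_eq, ← hb₁]
  · exact if_pos (hb₁.symm : H.lhit s = H.xs 0)
  · have hr := chord_subset_Icc (fst_mem_row hn hs) (rhit_mem_chord (fst_mem_row hn hs))
    exact absurd (hr.2.trans_eq hb₁) hlr.not_ge

lemma rptS_eq_of_fst_eq_rhit (hb : b ∈ H.verts) (hsb : s.2 < b.2) (hb₁ : b.1 = H.rhit s) :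
    H.rptS s = b := by
  have hlr := lhit_lt_rhit hn hs hs₀
  rcases snd_neg_or_eq_base hn hb with hb₀ | rfl | rfl
  · obtain ⟨i, hi, hbi⟩ := exists_castSucc_eq_rhit hn hs hs₀ hb hb₀ hsb hb₁
    have hgreatest : IsGreatest {y | y < 0 ∧ (H.rhit s, y) ∈ H.verts} b.2 := by
      refine ⟨⟨hb₀, hb₁ ▸ hb⟩, fun y ⟨hy₀, hy⟩ => le_of_not_gt fun hby => ?_⟩
      obtain ⟨j, hj, hyj⟩ := exists_castSucc_eq_rhit hn hs hs₀ hy hy₀ (hsb.trans hby) rfl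
      obtain rfl : j = i := Fin.castSucc_injective _ (H.xs_mono.injective (hj.trans hi.symm))
      exact hby.ne' (hyj.trans hbi.symm)
    have hne : H.rhit s ≠ H.xs (Fin.last H.m) :=
      hi ▸ (H.xs_mono (Fin.castSucc_lt_last i)).ne
    rw [rptS, if_neg hne, nearY, if_pos hs₀, hgreatest.csSup_eq, ← hb₁]
  · have hl := chord_subset_Icc (fst_mem_row hn hs) (lhit_mem_chord (fst_mem_row hn hs))
    exact absurd (hb₁.symm.trans_le hl.1) hlr.not_ge
  · exact if_pos (hb₁.symm : H.rhit s = H.xs (Fin.last H.m))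

lemma exists_d_gt_of_xs_zero_lt_lhit (h : H.xs 0 < H.lhit s) :
    ∃ k : Fin H.m, H.xs k.succ = H.lhit s ∧ s.2 < H.d k := by
  have hl := lhit_mem_chord (fst_mem_row hn hs)
  obtain ⟨j, hj, hdj⟩ := exists_col_of_mem_row hs₀ (chord_subset_row (fst_mem_row hn hs) hl)
  have hjl : H.xs j.castSucc = H.lhit s := le_antisymm hj.1
    (col_subset_chord hn hs hdj hj hl (xs_castSucc_mem_Icc _)).1
  obtain ⟨k, hk⟩ := Fin.exists_succ_eq.2 fun h₀ : j.castSucc = 0 => h.ne (h₀ ▸ hjl)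
  refine ⟨k, hk ▸ hjl, lt_of_not_ge fun hdk => ?_⟩
  have hkl := (col_subset_chord hn hs hdk (xs_succ_mem_Icc _)
    (hk ▸ hjl ▸ hl) (xs_castSucc_mem_Icc _)).1
  exact (hkl.trans_lt (xs_castSucc_lt_succ _)).ne (hk ▸ hjl).symm

lemma exists_d_gt_of_rhit_lt_xs_last (h : H.rhit s < H.xs (Fin.last H.m)) :
    ∃ k : Fin H.m, H.xs k.castSucc = H.rhit s ∧ s.2 < H.d k := by
  have hr := rhit_mem_chord (fst_mem_row hn hs)
  obtain ⟨j, hj, hdj⟩ := exists_col_of_mem_row hs₀ (chord_subset_row (fst_mem_row hn hs) hr)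
  have hjr : H.xs j.succ = H.rhit s := le_antisymm
    (col_subset_chord hn hs hdj hj hr (xs_succ_mem_Icc _)).2 hj.2
  obtain ⟨k, hk⟩ := Fin.exists_castSucc_eq.2 fun h₀ : j.succ = Fin.last H.m => h.ne (h₀ ▸ hjr).symm
  refine ⟨k, hk ▸ hjr, lt_of_not_ge fun hdk => ?_⟩
  have hkr := (col_subset_chord hn hs hdk (xs_castSucc_mem_Icc _)
    (hk ▸ hjr ▸ hr) (xs_succ_mem_Icc _)).2
  exact ((xs_castSucc_lt_succ _).trans_le hkr).ne' (hk ▸ hjr).symm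

lemma lptS_mem_verts : H.lptS s ∈ H.verts ∧ s.2 < (H.lptS s).2 := by
  have hl := chord_subset_Icc (fst_mem_row hn hs) (lhit_mem_chord (fst_mem_row hn hs))
  rcases hl.1.eq_or_lt with h | h
  · rw [lptS, if_pos h.symm]
    exact ⟨baseL_mem_verts hn, hs₀.trans baseHeight_pos⟩
  · obtain ⟨k, hk, hdk⟩ := exists_d_gt_of_xs_zero_lt_lhit hn hs hs₀ h
    rw [lptS_eq_of_fst_eq_lhit hn hs hs₀ (right_corner_mem_verts k) hdk hk]
    exact ⟨right_corner_mem_verts k, hdk⟩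

lemma rptS_mem_verts : H.rptS s ∈ H.verts ∧ s.2 < (H.rptS s).2 := by
  have hr := chord_subset_Icc (fst_mem_row hn hs) (rhit_mem_chord (fst_mem_row hn hs))
  rcases hr.2.eq_or_lt with h | h
  · rw [rptS, if_pos h]
    exact ⟨baseR_mem_verts hn, hs₀.trans baseHeight_pos⟩
  · obtain ⟨k, hk, hdk⟩ := exists_d_gt_of_rhit_lt_xs_last hn hs hs₀ h
    rw [rptS_eq_of_fst_eq_rhit hn hs hs₀ (left_corner_mem_verts k) hdk hk]
    exact ⟨left_corner_mem_verts k, hdk⟩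

lemma snd_le_max_lptS_rptS (hb : b ∈ H.verts) (hb₁ : b.1 ∈ H.chord s) :
    b.2 ≤ max (H.lptS s).2 (H.rptS s).2 := by
  rcases le_or_gt b.2 s.2 with hbs | hsb
  · exact hbs.trans ((lptS_mem_verts hn hs hs₀).2.le.trans (le_max_left _ _))
  · rcases fst_eq_lhit_or_rhit hn hs hs₀ hb hsb hb₁ with h | h
    · rw [lptS_eq_of_fst_eq_lhit hn hs hs₀ hb hsb h]
      exact le_max_left _ _
    · rw [rptS_eq_of_fst_eq_rhit hn hs hs₀ hb hsb h]
      exact le_max_right _ _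

end BottomVertex

lemma covisible_of_fst_eq (hn : H.n = 1) {p q : ℝ × ℝ} (hp : p ∈ H.verts) (hq : q ∈ H.verts)
    (h : p.1 = q.1) : H.covisible p q :=
  (covisible_iff_mem_chord hn hp hq).2
    ⟨h ▸ fst_mem_chord_of_mem_verts hn hp, h ▸ fst_mem_chord_of_mem_verts hn hq⟩

lemma covisible_corners (hn : H.n = 1) (i : Fin H.m) :
    H.covisible (H.xs i.castSucc, H.d i) (H.xs i.succ, H.d i) := by
  have hlt := xs_castSucc_lt_succ i
  exact (covisible_iff_of_le hn (left_corner_mem_verts i) (right_corner_mem_verts i) le_rfl).2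
    (Icc_subset_chord (Icc_subset_row_d i) (left_mem_Icc.2 hlt.le) (right_mem_Icc.2 hlt.le))

lemma reachable_of_covisible {u v : ↥H.verts} (h : H.covisible u v) : H.visGraph.Reachable u v := by
  by_cases huv : u = v
  · exact huv ▸ SimpleGraph.Reachable.refl u
  · exact SimpleGraph.Adj.reachable ⟨huv, h⟩

/-- Following the boundary of `P` leads from every vertex to `baseL`. -/
lemma reachable_baseL (hn : H.n = 1) (v : ↥H.verts) :
    H.visGraph.Reachable v ⟨H.baseL, baseL_mem_verts hn⟩ := by
  have hleft : ∀ (k : ℕ) (hk : k < H.m), H.visGraph.Reachable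
      ⟨_, left_corner_mem_verts ⟨k, hk⟩⟩ ⟨H.baseL, baseL_mem_verts hn⟩ := by
    intro k
    induction k with
    | zero =>
      exact fun _ =>
        reachable_of_covisible (covisible_of_fst_eq hn (Subtype.prop _) (Subtype.prop _) rfl)
    | succ k ih =>
      intro hk
      have hcol : H.visGraph.Reachable ⟨_, left_corner_mem_verts ⟨k + 1, hk⟩⟩
          ⟨_, right_corner_mem_verts ⟨k, by omega⟩⟩ :=
        reachable_of_covisible (covisible_of_fst_eq hn (Subtype.prop _) (Subtype.prop _) rfl)
      exact hcol.trans ((reachable_of_covisible (covisible_corners hn _)).symm.trans (ih _))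
  obtain ⟨v, hv⟩ := v
  rcases (mem_verts_iff hn).1 hv with ⟨i, rfl | rfl⟩ | rfl | rfl
  · exact hleft i i.2
  · exact (reachable_of_covisible (covisible_corners hn i)).symm.trans (hleft i i.2)
  · rfl
  · refine reachable_of_covisible ((covisible_iff_of_le hn hv (baseL_mem_verts hn) le_rfl).2 ?_)
    exact Icc_subset_chord_of_snd_eq hn hv rfl (left_mem_Icc.2 (H.xs_mono.monotone (Fin.zero_le _)))

lemma exists_onShortestPath_of_isGreatest (hn : H.n = 1) (s t : ↥H.verts) {g : ℝ × ℝ}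
    (hg : g ∈ H.verts) (hg₁ : g.1 ∈ H.chord s)
    (hgreatest : ∀ b ∈ H.verts, b.1 ∈ H.chord s → b.2 ≤ g.2) (ht : (t : ℝ × ℝ).1 ∉ H.chord s) :
    ∃ w : ↥H.verts, (w : ℝ × ℝ) = g ∧ H.OnShortestPath s t w := by
  obtain ⟨p, hp⟩ :=
    ((reachable_baseL hn s).trans (reachable_baseL hn t).symm).exists_walk_length_eq_dist
  obtain ⟨b, c, w₁, hbc, w₂, hb, hc, rfl⟩ := p.exists_eq_append_cons_of_boundary
    (fun u : ↥H.verts => (u : ℝ × ℝ).1 ∈ H.chord s) (fst_mem_chord_of_mem_verts hn s.2) ht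
  have hsb := (lt_snd_of_covisible hn s.2 b.2 c.2 hbc.2 hb hc).1
  by_cases hbg : (b : ℝ × ℝ) = g
  · exact ⟨b, hbg, _, hp, by simp⟩
  have hsg : H.visGraph.Adj s ⟨g, hg⟩ := ⟨fun h => (hsb.trans_le (hgreatest b b.2 hb)).ne
    (congrArg (fun u : ↥H.verts => (u : ℝ × ℝ).2) h),
    (covisible_iff_of_le hn s.2 hg (hsb.le.trans (hgreatest b b.2 hb))).2 hg₁⟩
  have hgc : H.visGraph.Adj ⟨g, hg⟩ c := ⟨fun h => hc (by rw [← h]; exact hg₁),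
    covisible_of_le_snd hn s.2 b.2 hg c.2 hb hg₁ (hgreatest b b.2 hb) hc hbc.2⟩
  have hw₁ : w₁.length ≠ 0 := fun h => hsb.ne
    (congrArg (fun u : ↥H.verts => (u : ℝ × ℝ).2) (SimpleGraph.Walk.eq_of_length_eq_zero h))
  refine ⟨⟨g, hg⟩, rfl, .cons hsg (.cons hgc w₂), le_antisymm ?_ (SimpleGraph.dist_le _), by simp⟩
  simp only [SimpleGraph.Walk.length_cons, SimpleGraph.Walk.length_append] at hp ⊢
  omega

end DoubleHistogram

/-- In a simple histogram, let `t ∉ I(s)`.  If `ℓ(s)_y > r(s)_y` there is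
a shortest path from `s` to `t` through `ℓ(s)`; if `ℓ(s)_y < r(s)_y` there is a shortest
path from `s` to `t` through `r(s)`. -/
theorem taking_higher_is_better
    (H : DoubleHistogram) (hSimple : H.n = 1)
    (s t : ↥H.verts) (ht : (t : ℝ × ℝ) ∉ H.IvS (s : ℝ × ℝ)) :
    ((H.rptS (s : ℝ × ℝ)).2 < (H.lptS (s : ℝ × ℝ)).2 →
      ∃ w : ↥H.verts, (w : ℝ × ℝ) = H.lptS (s : ℝ × ℝ) ∧ H.OnShortestPath s t w) ∧
    ((H.lptS (s : ℝ × ℝ)).2 < (H.rptS (s : ℝ × ℝ)).2 →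
      ∃ w : ↥H.verts, (w : ℝ × ℝ) = H.rptS (s : ℝ × ℝ) ∧ H.OnShortestPath s t w) := by
  open DoubleHistogram in
  have ht' : (t : ℝ × ℝ).1 ∉ H.chord s := fun h =>
    ht ⟨t.2, (lptS_fst _).trans_le h.1, h.2.trans_eq (rptS_fst _).symm⟩
  have hs₀ : (s : ℝ × ℝ).2 < 0 := by
    refine (snd_neg_or_eq_base hSimple s.2).resolve_right fun hbase => ht' ?_
    refine Icc_subset_chord_of_snd_eq hSimple s.2 ?_ (row_subset_Icc _ (fst_mem_row hSimple t.2))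
    rcases hbase with h | h <;> rw [h] <;> rfl
  have hmax := fun b hb hb₁ => snd_le_max_lptS_rptS hSimple s.2 hs₀ (b := b) hb hb₁
  refine ⟨fun hlt => ?_, fun hlt => ?_⟩
  · refine exists_onShortestPath_of_isGreatest hSimple s t (lptS_mem_verts hSimple s.2 hs₀).1
      ((lptS_fst _).symm ▸ lhit_mem_chord (fst_mem_row hSimple s.2)) (fun b hb hb₁ => ?_) ht'
    exact (hmax b hb hb₁).trans_eq (max_eq_left hlt.le)
  · refine exists_onShortestPath_of_isGreatest hSimple s t (rptS_mem_verts hSimple s.2 hs₀).1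
      ((rptS_fst _).symm ▸ rhit_mem_chord (fst_mem_row hSimple s.2)) (fun b hb hb₁ => ?_) ht'
    exact (hmax b hb hb₁).trans_eq (max_eq_right hlt.le)
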